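/- Let U ⊆ ℝ⁴ \ {0} be an open conic set and L : U → ℝ a smooth, nowhere-zero function, positively homogeneous of degree 2, whose L-metric g(y) (entries g_{ij}(y) = (1/2)∂²L/∂yⁱ∂yʲ(y)) is invertible on U with inverse entries g^{ij}(y). Let f : U → ℝ be smooth and positively homogeneous of degree 0 (f(λy) = f(y) for λ > 0). Then for every y ∈ U: ( Σ_{i,j} g^{ij}(y)·∂²(L·f)/∂yⁱ∂yʲ(y) − 8 f(y) ) · det g(y)/L(y)² = Σ_j ∂/∂yʲ [ (Σ_i g^{ji} ∂f/∂yⁱ)·det g/L ](y). -/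

import Mathlib

noncomputable section

/-- Partial derivative `∂f/∂yⁱ(y)`. -/
def pd (f : (Fin 4 → ℝ) → ℝ) (i : Fin 4) (y : Fin 4 → ℝ) : ℝ :=
  fderiv ℝ f y (Pi.single i 1)

/-- The L-metric: the matrix `g_{ij}(y) = (1/2) ∂²L/∂yⁱ∂yʲ (y)`. -/
def Lmetric (L : (Fin 4 → ℝ) → ℝ) (y : Fin 4 → ℝ) : Matrix (Fin 4) (Fin 4) ℝ :=
  Matrix.of fun i j => (1 / 2) * pd (pd L j) i y

open scoped Topology
open Matrix

section Helpers

variable {y : Fin 4 → ℝ}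

lemma pd_congr {h₁ h₂ : (Fin 4 → ℝ) → ℝ} (h : h₁ =ᶠ[𝓝 y] h₂) (i : Fin 4) :
    pd h₁ i y = pd h₂ i y := by
  unfold pd; rw [h.fderiv_eq]

lemma contDiffOn_pd {U : Set (Fin 4 → ℝ)} (hU : IsOpen U) {h : (Fin 4 → ℝ) → ℝ}
    (hh : ContDiffOn ℝ (⊤ : ℕ∞) h U) (i : Fin 4) : ContDiffOn ℝ (⊤ : ℕ∞) (pd h i) U :=
  (hh.fderiv_of_isOpen hU (by simp)).clm_apply contDiffOn_const

lemma pd_mul {a b : (Fin 4 → ℝ) → ℝ} (ha : DifferentiableAt ℝ a y)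
    (hb : DifferentiableAt ℝ b y) (i : Fin 4) :
    pd (fun z => a z * b z) i y = pd a i y * b y + a y * pd b i y := by
  unfold pd
  rw [fderiv_fun_mul ha hb]
  simp only [ContinuousLinearMap.add_apply, ContinuousLinearMap.smul_apply, smul_eq_mul]
  ring

lemma pd_add {a b : (Fin 4 → ℝ) → ℝ} (ha : DifferentiableAt ℝ a y)
    (hb : DifferentiableAt ℝ b y) (i : Fin 4) :
    pd (fun z => a z + b z) i y = pd a i y + pd b i y := by
  unfold pd; rw [fderiv_fun_add ha hb]; simp

lemma pd_div {a b : (Fin 4 → ℝ) → ℝ} (ha : DifferentiableAt ℝ a y)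
    (hb : DifferentiableAt ℝ b y) (hb0 : b y ≠ 0) (i : Fin 4) :
    pd (fun z => a z / b z) i y = (pd a i y * b y - a y * pd b i y) / (b y) ^ 2 := by
  have hi : HasFDerivAt (fun z => (b z)⁻¹) ((-(b y ^ 2)⁻¹) • fderiv ℝ b y) y :=
    (hasDerivAt_inv hb0).comp_hasFDerivAt y hb.hasFDerivAt
  have h1 : (fun z => a z / b z) = fun z => a z * (b z)⁻¹ := by
    funext z; rw [div_eq_mul_inv]
  rw [h1, pd_mul ha hi.differentiableAt]
  have h2 : pd (fun z => (b z)⁻¹) i y = (-(b y ^ 2)⁻¹) * pd b i y := by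
    unfold pd; rw [hi.fderiv]; simp
  rw [h2]
  field_simp
  ring

lemma pd_sum {s : Finset (Fin 4)} {F : Fin 4 → (Fin 4 → ℝ) → ℝ}
    (hF : ∀ j ∈ s, DifferentiableAt ℝ (F j) y) (i : Fin 4) :
    pd (fun z => ∑ j ∈ s, F j z) i y = ∑ j ∈ s, pd (F j) i y := by
  unfold pd
  rw [fderiv_fun_sum hF]
  simp

lemma pd_const_mul {a : (Fin 4 → ℝ) → ℝ} (ha : DifferentiableAt ℝ a y) (c : ℝ) (i : Fin 4) :
    pd (fun z => c * a z) i y = c * pd a i y := by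
  unfold pd
  rw [fderiv_const_mul ha]
  simp

lemma pd_comm {h : (Fin 4 → ℝ) → ℝ} (hh : ContDiffAt ℝ (⊤ : ℕ∞) h y) (i j : Fin 4) :
    pd (pd h j) i y = pd (pd h i) j y := by
  have hsymm := hh.isSymmSndFDerivAt (by rw [minSmoothness_of_isRCLikeNormedField]; exact WithTop.coe_le_coe.mpr le_top)
  have hd : DifferentiableAt ℝ (fderiv ℝ h) y := by
    have : ContDiffAt ℝ 1 (fderiv ℝ h) y := hh.fderiv_right (WithTop.coe_le_coe.mpr le_top)
    exact this.differentiableAt one_ne_zero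
  have key : ∀ v w : Fin 4 → ℝ,
      fderiv ℝ (fun z => fderiv ℝ h z v) y w = fderiv ℝ (fderiv ℝ h) y w v := by
    intro v w
    rw [fderiv_clm_apply hd (differentiableAt_const v)]
    simp
  show fderiv ℝ (fun z => fderiv ℝ h z (Pi.single j 1)) y (Pi.single i 1) = _
  rw [key, hsymm.eq]
  exact (key _ _).symm

/-- Euler's identity for positively homogeneous functions of (ℕ-)degree `d`. -/
lemma euler {U : Set (Fin 4 → ℝ)} (hU : IsOpen U) {h : (Fin 4 → ℝ) → ℝ} {d : ℕ}
    (hhom : ∀ z ∈ U, ∀ l : ℝ, 0 < l → h (l • z) = l ^ d * h z)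
    (hy : y ∈ U) (hdiff : DifferentiableAt ℝ h y) :
    fderiv ℝ h y y = d * h y := by
  have hsm : HasDerivAt (fun l : ℝ => l • y) y 1 := by
    simpa using (hasDerivAt_id (1 : ℝ)).smul_const y
  have h1 : HasDerivAt (fun l : ℝ => h (l • y)) (fderiv ℝ h y y) 1 := by
    have hd1 : HasFDerivAt h (fderiv ℝ h y) ((1:ℝ) • y) := by
      rw [one_smul]; exact hdiff.hasFDerivAt
    have := hd1.comp_hasDerivAt 1 hsm
    exact this
  have h2 : HasDerivAt (fun l : ℝ => l ^ d * h y) (d * h y) 1 := by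
    simpa using (hasDerivAt_pow d (1 : ℝ)).mul_const (h y)
  have heq : (fun l : ℝ => h (l • y)) =ᶠ[𝓝 (1 : ℝ)] fun l : ℝ => l ^ d * h y := by
    filter_upwards [isOpen_Ioi.mem_nhds (by norm_num : (0:ℝ) < 1)] with l hl
    exact hhom y hy l hl
  have h3 : HasDerivAt (fun l : ℝ => h (l • y)) (d * h y) 1 := by
    apply HasDerivAt.congr_of_eventuallyEq h2 heq
  exact h1.unique h3

lemma fderiv_apply_eq_sum_pd {h : (Fin 4 → ℝ) → ℝ} :
    fderiv ℝ h y y = ∑ k, y k * pd h k y := by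
  have h1 : y = ∑ k, y k • (Pi.single k 1 : Fin 4 → ℝ) := by
    funext r
    simp [Pi.single_apply, Finset.sum_apply]
  calc fderiv ℝ h y y = fderiv ℝ h y (∑ k, y k • (Pi.single k 1 : Fin 4 → ℝ)) := by rw [← h1]
    _ = ∑ k, y k * pd h k y := by rw [map_sum]; simp [pd]

/-- The fiber derivative of an `l^2`-homogeneous function is `l^1`-homogeneous. -/
lemma pd_hom {U : Set (Fin 4 → ℝ)} (hUopen : IsOpen U)
    (hUconic : ∀ z ∈ U, ∀ l : ℝ, 0 < l → l • z ∈ U)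
    {L : (Fin 4 → ℝ) → ℝ} (hLs : ContDiffOn ℝ (⊤ : ℕ∞) L U)
    (hhom : ∀ z ∈ U, ∀ l : ℝ, 0 < l → L (l • z) = l ^ 2 * L z) (j : Fin 4) :
    ∀ z ∈ U, ∀ l : ℝ, 0 < l → pd L j (l • z) = l * pd L j z := by
  intro z hz l hl
  have hzU : l • z ∈ U := hUconic z hz l hl
  have hdz : DifferentiableAt ℝ L z :=
    ((hLs.contDiffAt (hUopen.mem_nhds hz)).differentiableAt (by simp))
  have hdlz : DifferentiableAt ℝ L (l • z) :=
    ((hLs.contDiffAt (hUopen.mem_nhds hzU)).differentiableAt (by simp))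
  have hsm : HasFDerivAt (fun w : Fin 4 → ℝ => l • w) (l • ContinuousLinearMap.id ℝ (Fin 4 → ℝ)) z :=
    ((ContinuousLinearMap.id ℝ (Fin 4 → ℝ)).hasFDerivAt.const_smul l)
  have hF1 : HasFDerivAt (fun w => L (l • w))
      ((fderiv ℝ L (l • z)).comp (l • ContinuousLinearMap.id ℝ (Fin 4 → ℝ))) z :=
    hdlz.hasFDerivAt.comp z hsm
  have heq : (fun w => L (l • w)) =ᶠ[𝓝 z] fun w => l ^ 2 * L w := by
    filter_upwards [hUopen.mem_nhds hz] with w hw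
    exact hhom w hw l hl
  have hF2 : HasFDerivAt (fun w => L (l • w)) (l ^ 2 • fderiv ℝ L z) z := by
    exact ((hdz.hasFDerivAt.const_smul (l ^ 2)).congr_of_eventuallyEq heq)
  have := hF1.unique hF2
  have happ := congrArg (fun Φ : (Fin 4 → ℝ) →L[ℝ] ℝ => Φ (Pi.single j 1)) this
  simp only [ContinuousLinearMap.comp_apply, ContinuousLinearMap.smul_apply,
    ContinuousLinearMap.coe_smul', Pi.smul_apply, ContinuousLinearMap.coe_id', id_eq,
    smul_eq_mul] at happ
  have happ' : l * pd L j (l • z) = l ^ 2 * pd L j z := by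
    simpa [pd, _root_.map_smul, smul_eq_mul] using happ
  have hl0 : l ≠ 0 := ne_of_gt hl
  have : l * pd L j (l • z) = l * (l * pd L j z) := by rw [happ']; ring
  exact mul_left_cancel₀ hl0 this

/-- Algebraic Jacobi helper: the permutation-sum appearing in the derivative of `det`
along column `i`, with column direction `c`, equals `∑ k, c k * Aᵀ.adjugate k i`. -/
lemma sum_perm_det (A : Matrix (Fin 4) (Fin 4) ℝ) (c : Fin 4 → ℝ) (i : Fin 4) :
    ∑ σ : Equiv.Perm (Fin 4), (Equiv.Perm.sign σ : ℝ) *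
        ((∏ j ∈ Finset.univ.erase i, A (σ j) j) * c (σ i)) =
      ∑ k, c k * Aᵀ.adjugate k i := by
  have h1 : ∑ σ : Equiv.Perm (Fin 4), (Equiv.Perm.sign σ : ℝ) *
        ((∏ j ∈ Finset.univ.erase i, A (σ j) j) * c (σ i)) =
      (A.updateCol i c).det := by
    rw [det_apply']
    refine Finset.sum_congr rfl fun σ _ => ?_
    congr 1
    rw [← Finset.mul_prod_erase Finset.univ _ (Finset.mem_univ i)]
    rw [updateCol_self, mul_comm]
    congr 1
    refine Finset.prod_congr rfl fun j hj => ?_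
    exact (updateCol_ne (Finset.ne_of_mem_erase hj)).symm
  rw [h1, ← cramer_apply]
  have h2 : c = ∑ k, c k • (Pi.single k 1 : Fin 4 → ℝ) := by
    funext r
    simp [Pi.single_apply, Finset.sum_apply]
  have h4 : cramer A c = ∑ k, c k • cramer A (Pi.single k 1) := by
    conv_lhs => rw [h2]
    rw [map_sum]
    exact Finset.sum_congr rfl fun k _ => LinearMap.map_smul _ _ _
  rw [h4]
  simp only [Finset.sum_apply, Pi.smul_apply, smul_eq_mul]
  refine Finset.sum_congr rfl fun k _ => ?_
  congr 1

/-- Differentiability of `det` of a matrix-valued function. -/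
lemma diffAt_det {N : (Fin 4 → ℝ) → Matrix (Fin 4) (Fin 4) ℝ}
    (hN : ∀ k i, DifferentiableAt ℝ (fun z => N z k i) y) :
    DifferentiableAt ℝ (fun z => (N z).det) y := by
  have h1 : (fun z => (N z).det) =
      fun z => ∑ σ : Equiv.Perm (Fin 4), (Equiv.Perm.sign σ : ℝ) * ∏ i, N z (σ i) i := by
    funext z; rw [det_apply']
  rw [h1]
  refine DifferentiableAt.fun_sum fun σ _ => DifferentiableAt.const_mul ?_ _
  have := HasFDerivAt.finset_prod (u := Finset.univ)
    (g := fun i z => N z (σ i) i) (g' := fun i => fderiv ℝ (fun z => N z (σ i) i) y)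
    (fun i _ => (hN (σ i) i).hasFDerivAt)
  exact this.differentiableAt

/-- Jacobi's formula for the fiberwise derivative of `det` of a matrix-valued function. -/
lemma pd_det {N : (Fin 4 → ℝ) → Matrix (Fin 4) (Fin 4) ℝ}
    (hN : ∀ k i, DifferentiableAt ℝ (fun z => N z k i) y) (m : Fin 4) :
    pd (fun z => (N z).det) m y =
      ∑ i, ∑ k, pd (fun z => N z k i) m y * (N y)ᵀ.adjugate k i := by
  have h1 : (fun z => (N z).det) =
      fun z => ∑ σ : Equiv.Perm (Fin 4), (Equiv.Perm.sign σ : ℝ) * ∏ i, N z (σ i) i := by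
    funext z; rw [det_apply']
  have hprod : ∀ σ : Equiv.Perm (Fin 4), HasFDerivAt (fun z => ∏ i, N z (σ i) i)
      (∑ i, (∏ j ∈ Finset.univ.erase i, N y (σ j) j) • fderiv ℝ (fun z => N z (σ i) i) y) y :=
    fun σ => HasFDerivAt.finset_prod (fun i _ => (hN (σ i) i).hasFDerivAt)
  have h2 : pd (fun z => (N z).det) m y =
      ∑ σ : Equiv.Perm (Fin 4), (Equiv.Perm.sign σ : ℝ) *
        ∑ i, (∏ j ∈ Finset.univ.erase i, N y (σ j) j) * pd (fun z => N z (σ i) i) m y := by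
    rw [h1]
    unfold pd
    rw [fderiv_fun_sum fun σ _ => ((hprod σ).differentiableAt.const_mul _)]
    rw [ContinuousLinearMap.sum_apply]
    refine Finset.sum_congr rfl fun σ _ => ?_
    rw [fderiv_const_mul (hprod σ).differentiableAt]
    rw [(hprod σ).fderiv]
    simp [Finset.mul_sum]
  rw [h2]
  have h3 : ∀ σ : Equiv.Perm (Fin 4), (Equiv.Perm.sign σ : ℝ) *
        ∑ i, (∏ j ∈ Finset.univ.erase i, N y (σ j) j) * pd (fun z => N z (σ i) i) m y =
      ∑ i, (Equiv.Perm.sign σ : ℝ) *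
        ((∏ j ∈ Finset.univ.erase i, N y (σ j) j) * pd (fun z => N z (σ i) i) m y) := by
    intro σ; rw [Finset.mul_sum]
  simp only [h3]
  rw [Finset.sum_comm]
  refine Finset.sum_congr rfl fun i _ => ?_
  have := sum_perm_det (N y) (fun k => pd (fun z => N z k i) m y) i
  convert this using 2

/-- Differentiability of entries of `adjugate` of a matrix-valued function. -/
lemma diffAt_adj {N : (Fin 4 → ℝ) → Matrix (Fin 4) (Fin 4) ℝ}
    (hN : ∀ k i, DifferentiableAt ℝ (fun z => N z k i) y) (j i : Fin 4) :
    DifferentiableAt ℝ (fun z => (N z).adjugate j i) y := by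
  have h1 : (fun z => (N z).adjugate j i) =
      fun z => ((N z).updateRow i (Pi.single j 1)).det := by
    funext z; rw [adjugate_apply]
  rw [h1]
  refine diffAt_det fun k l => ?_
  by_cases hk : k = i
  · subst hk
    simp only [updateRow_self]
    exact differentiableAt_const _
  · simp only [updateRow_ne hk]
    exact hN k l

lemma sum_mul_one_right (g : Fin 4 → ℝ) (l : Fin 4) :
    ∑ k, g k * (1 : Matrix (Fin 4) (Fin 4) ℝ) k l = g l := by
  simp [Matrix.one_apply]

lemma sum_one_mul_left (g : Fin 4 → ℝ) (j : Fin 4) :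
    ∑ i, (1 : Matrix (Fin 4) (Fin 4) ℝ) j i * g i = g j := by
  simp [Matrix.one_apply]

lemma adj_eq {B : Matrix (Fin 4) (Fin 4) ℝ} (h : IsUnit B.det) (j k : Fin 4) :
    B.adjugate j k = B.det * B⁻¹ j k := by
  have h1 : B⁻¹ = B.det⁻¹ • B.adjugate := by
    rw [inv_def, Ring.inverse_eq_inv']
  rw [h1]
  simp only [Matrix.smul_apply, smul_eq_mul]
  rw [← mul_assoc, mul_inv_cancel₀ h.ne_zero, one_mul]

lemma contract_right (P : Fin 4 → ℝ) (A B : Matrix (Fin 4) (Fin 4) ℝ)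
    (h : ∀ k l, ∑ i, A k i * B i l = (1 : Matrix (Fin 4) (Fin 4) ℝ) k l) (l : Fin 4) :
    ∑ i, (∑ k, P k * A k i) * B i l = P l := by
  calc ∑ i, (∑ k, P k * A k i) * B i l
      = ∑ i, ∑ k, P k * A k i * B i l := by
        refine Finset.sum_congr rfl fun i _ => ?_; rw [Finset.sum_mul]
    _ = ∑ k, ∑ i, P k * A k i * B i l := Finset.sum_comm
    _ = ∑ k, P k * ∑ i, A k i * B i l := by
        refine Finset.sum_congr rfl fun k _ => ?_
        rw [Finset.mul_sum]
        refine Finset.sum_congr rfl fun i _ => ?_; ring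
    _ = ∑ k, P k * (1 : Matrix (Fin 4) (Fin 4) ℝ) k l := by
        refine Finset.sum_congr rfl fun k _ => ?_; rw [h k l]
    _ = P l := sum_mul_one_right _ l

lemma expand_delta (Q : ℝ) (S : Fin 4 → ℝ) (G : Matrix (Fin 4) (Fin 4) ℝ) (j l : Fin 4) :
    ∑ i, (Q * (1 : Matrix (Fin 4) (Fin 4) ℝ) j i - S i) * G i l
      = Q * G j l - ∑ i, S i * G i l := by
  have h1 : ∀ i, (Q * (1 : Matrix (Fin 4) (Fin 4) ℝ) j i - S i) * G i l
      = Q * ((1 : Matrix (Fin 4) (Fin 4) ℝ) j i * G i l) - S i * G i l := by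
    intro i; ring
  simp only [h1]
  rw [Finset.sum_sub_distrib, ← Finset.mul_sum, sum_one_mul_left]

end Helpers

/-- Identity (C1) of the paper's Lemma 3, in fiber coordinates:
`[g^{ij} (Lf)_{·i·j} − 8f]·det g/L²` is the divergence of
`X^j = (g^{ji} f_{·i})·det g/L`. -/
theorem lemma3_first_identity (U : Set (Fin 4 → ℝ)) (hUopen : IsOpen U)
    (hU0 : ∀ y ∈ U, y ≠ (0 : Fin 4 → ℝ))
    (hUconic : ∀ y ∈ U, ∀ l : ℝ, 0 < l → l • y ∈ U)
    (L : (Fin 4 → ℝ) → ℝ) (hLs : ContDiffOn ℝ (⊤ : ℕ∞) L U) (hL0 : ∀ y ∈ U, L y ≠ 0)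
    (hhom : ∀ y ∈ U, ∀ l : ℝ, 0 < l → L (l • y) = l ^ 2 * L y)
    (hinv : ∀ y ∈ U, IsUnit (Lmetric L y).det)
    (f : (Fin 4 → ℝ) → ℝ) (hfs : ContDiffOn ℝ (⊤ : ℕ∞) f U)
    (hfhom : ∀ y ∈ U, ∀ l : ℝ, 0 < l → f (l • y) = f y) :
    ∀ y ∈ U,
      ((∑ i : Fin 4, ∑ j : Fin 4,
            (Lmetric L y)⁻¹ i j * pd (pd (fun z => L z * f z) j) i y) - 8 * f y) *
          (Lmetric L y).det / (L y) ^ 2 =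
      ∑ j : Fin 4,
        fderiv ℝ
          (fun z => (∑ i : Fin 4, (Lmetric L z)⁻¹ j i * pd f i z) *
            (Lmetric L z).det / L z) y (Pi.single j 1) := by
  intro y hy
  classical
  have hnhds : U ∈ 𝓝 y := hUopen.mem_nhds hy
  have dAt : ∀ h : (Fin 4 → ℝ) → ℝ, ContDiffOn ℝ (⊤ : ℕ∞) h U → ∀ z ∈ U, DifferentiableAt ℝ h z :=
    fun h hh z hz => (hh.contDiffAt (hUopen.mem_nhds hz)).differentiableAt (by simp)
  have hL1 : ∀ i, ContDiffOn ℝ (⊤ : ℕ∞) (pd L i) U := fun i => contDiffOn_pd hUopen hLs i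
  have hL2 : ∀ i j, ContDiffOn ℝ (⊤ : ℕ∞) (pd (pd L j) i) U := fun i j => contDiffOn_pd hUopen (hL1 j) i
  have hf1 : ∀ i, ContDiffOn ℝ (⊤ : ℕ∞) (pd f i) U := fun i => contDiffOn_pd hUopen hfs i
  have hment : ∀ k i, ContDiffOn ℝ (⊤ : ℕ∞) (fun z => Lmetric L z k i) U := fun k i =>
    contDiffOn_const.mul (hL2 k i)
  have hdm : ∀ k i, DifferentiableAt ℝ (fun z => Lmetric L z k i) y :=
    fun k i => dAt _ (hment k i) y hy
  have hdf : DifferentiableAt ℝ f y := dAt f hfs y hy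
  have hdL : DifferentiableAt ℝ L y := dAt L hLs y hy
  have hdf1 : ∀ i, DifferentiableAt ℝ (pd f i) y := fun i => dAt _ (hf1 i) y hy
  have hdL1 : ∀ i, DifferentiableAt ℝ (pd L i) y := fun i => dAt _ (hL1 i) y hy
  have hdadj : ∀ j i, DifferentiableAt ℝ (fun z => (Lmetric L z).adjugate j i) y :=
    fun j i => diffAt_adj hdm j i
  have hddet : DifferentiableAt ℝ (fun z => (Lmetric L z).det) y := diffAt_det hdm
  have hdet := hinv y hy
  have hdet0 : (Lmetric L y).det ≠ 0 := hdet.ne_zero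
  have hLy0 : L y ≠ 0 := hL0 y hy
  have hAval : ∀ i j, pd (pd L j) i y = 2 * Lmetric L y i j := by
    intro i j; show _ = 2 * ((1/2 : ℝ) * pd (pd L j) i y); ring
  have hAsym : ∀ i j, Lmetric L y i j = Lmetric L y j i := by
    intro i j
    show (1/2 : ℝ) * pd (pd L j) i y = (1/2 : ℝ) * pd (pd L i) j y
    rw [pd_comm (hLs.contDiffAt hnhds) i j]
  have hAT : (Lmetric L y)ᵀ = Lmetric L y := by
    ext i j; exact hAsym j i
  have hone1 : ∀ k l, ∑ i, Lmetric L y k i * (Lmetric L y)⁻¹ i l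
      = (1 : Matrix (Fin 4) (Fin 4) ℝ) k l := by
    intro k l; rw [← Matrix.mul_apply, mul_nonsing_inv _ hdet]
  have hone2 : ∀ k l, ∑ i, (Lmetric L y)⁻¹ k i * Lmetric L y i l
      = (1 : Matrix (Fin 4) (Fin 4) ℝ) k l := by
    intro k l; rw [← Matrix.mul_apply, nonsing_inv_mul _ hdet]
  have hgisym : ∀ i j, (Lmetric L y)⁻¹ i j = (Lmetric L y)⁻¹ j i := by
    intro i j
    conv_lhs => rw [← hAT]
    rw [← transpose_nonsing_inv]
    rfl
  have hEf : ∑ k, y k * pd f k y = 0 := by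
    have h0 : ∀ z ∈ U, ∀ l : ℝ, 0 < l → f (l • z) = l ^ (0 : ℕ) * f z := by
      intro z hz l hl; rw [pow_zero, one_mul]; exact hfhom z hz l hl
    have h2 := euler hUopen h0 hy hdf
    rw [fderiv_apply_eq_sum_pd] at h2
    simpa using h2
  have hEL : ∀ j, ∑ k, y k * pd (pd L j) k y = pd L j y := by
    intro j
    have h1 : ∀ z ∈ U, ∀ l : ℝ, 0 < l → pd L j (l • z) = l ^ (1 : ℕ) * pd L j z := by
      intro z hz l hl; rw [pow_one]; exact pd_hom hUopen hUconic hLs hhom j z hz l hl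
    have h2 := euler hUopen h1 hy (hdL1 j)
    rw [fderiv_apply_eq_sum_pd] at h2
    simpa using h2
  have hLcontr : ∀ i, ∑ j, (Lmetric L y)⁻¹ i j * pd L j y = 2 * y i := by
    intro i
    have h1 : ∀ j, pd L j y = ∑ k, y k * (2 * Lmetric L y k j) := by
      intro j
      rw [← hEL j]
      exact Finset.sum_congr rfl fun k _ => by rw [hAval k j]
    calc ∑ j, (Lmetric L y)⁻¹ i j * pd L j y
        = ∑ j, ∑ k, (y k * 2) * ((Lmetric L y)⁻¹ i j * Lmetric L y j k) := by
          refine Finset.sum_congr rfl fun j _ => ?_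
          rw [h1 j, Finset.mul_sum]
          refine Finset.sum_congr rfl fun k _ => ?_
          rw [hAsym k j]; ring
      _ = ∑ k, ∑ j, (y k * 2) * ((Lmetric L y)⁻¹ i j * Lmetric L y j k) := Finset.sum_comm
      _ = ∑ k, (y k * 2) * (1 : Matrix (Fin 4) (Fin 4) ℝ) i k := by
          refine Finset.sum_congr rfl fun k _ => ?_
          rw [← Finset.mul_sum, hone2 i k]
      _ = 2 * y i := by
          simp [Matrix.one_apply, mul_ite, Finset.sum_ite_eq]
          ring
  have hT1 : ∀ m k i, pd (fun z => Lmetric L z k i) m y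
      = (1/2) * pd (pd (pd L i) k) m y := by
    intro m k i
    have he : (fun z => Lmetric L z k i) = fun z => (1/2 : ℝ) * pd (pd L i) k z := rfl
    rw [he, pd_const_mul (dAt _ (hL2 k i) y hy)]
  have hTsym1 : ∀ m k i, pd (fun z => Lmetric L z k i) m y
      = pd (fun z => Lmetric L z m i) k y := by
    intro m k i; rw [hT1, hT1, pd_comm ((hL1 i).contDiffAt hnhds) m k]
  have hTsym2 : ∀ m k i, pd (fun z => Lmetric L z k i) m y
      = pd (fun z => Lmetric L z i k) m y := by
    intro m k i; rw [hT1, hT1]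
    congr 1
    refine pd_congr ?_ m
    filter_upwards [hnhds] with z hz
    exact pd_comm (hLs.contDiffAt (hUopen.mem_nhds hz)) k i
  have hQ : ∀ m, pd (fun z => (Lmetric L z).det) m y =
      ∑ p, ∑ q, pd (fun z => Lmetric L z q p) m y
        * ((Lmetric L y).det * (Lmetric L y)⁻¹ q p) := by
    intro m
    rw [pd_det hdm m]
    refine Finset.sum_congr rfl fun p _ => Finset.sum_congr rfl fun q _ => ?_
    rw [hAT, adj_eq hdet]
  have hP1 : ∀ j i m, ∑ k, (pd (fun z => (Lmetric L z).adjugate j k) m y * Lmetric L y k i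
        + ((Lmetric L y).det * (Lmetric L y)⁻¹ j k) * pd (fun z => Lmetric L z k i) m y)
      = pd (fun z => (Lmetric L z).det) m y * (1 : Matrix (Fin 4) (Fin 4) ℝ) j i := by
    intro j i m
    have hfe : (fun z => ∑ k, (Lmetric L z).adjugate j k * Lmetric L z k i)
        = fun z => (Lmetric L z).det * (1 : Matrix (Fin 4) (Fin 4) ℝ) j i := by
      funext z
      have h := congrFun (congrFun (adjugate_mul (Lmetric L z)) j) i
      rw [Matrix.mul_apply] at h
      rw [h, Matrix.smul_apply, smul_eq_mul]
    have hlhs : pd (fun z => ∑ k, (Lmetric L z).adjugate j k * Lmetric L z k i) m y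
        = ∑ k, (pd (fun z => (Lmetric L z).adjugate j k) m y * Lmetric L y k i
            + (Lmetric L y).adjugate j k * pd (fun z => Lmetric L z k i) m y) := by
      rw [pd_sum (F := fun k z => (Lmetric L z).adjugate j k * Lmetric L z k i)
        (fun k _ => (hdadj j k).mul (hdm k i)) m]
      exact Finset.sum_congr rfl fun k _ => pd_mul (hdadj j k) (hdm k i) m
    have hrhs : pd (fun z => (Lmetric L z).det * (1 : Matrix (Fin 4) (Fin 4) ℝ) j i) m y
        = pd (fun z => (Lmetric L z).det) m y * (1 : Matrix (Fin 4) (Fin 4) ℝ) j i := by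
      rw [pd_mul (b := fun _ => (1 : Matrix (Fin 4) (Fin 4) ℝ) j i) hddet
        (differentiableAt_const _) m]
      have hc : pd (fun _ : Fin 4 → ℝ => (1 : Matrix (Fin 4) (Fin 4) ℝ) j i) m y = 0 := by
        unfold pd; rw [fderiv_fun_const]; simp
      rw [hc]; ring
    have key : ∑ k, (pd (fun z => (Lmetric L z).adjugate j k) m y * Lmetric L y k i
            + (Lmetric L y).adjugate j k * pd (fun z => Lmetric L z k i) m y)
        = pd (fun z => (Lmetric L z).det) m y * (1 : Matrix (Fin 4) (Fin 4) ℝ) j i := by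
      rw [← hlhs, hfe, hrhs]
    rw [← key]
    refine Finset.sum_congr rfl fun k _ => ?_
    rw [adj_eq hdet j k]
  have hP2 : ∀ j l m, pd (fun z => (Lmetric L z).adjugate j l) m y
      = pd (fun z => (Lmetric L z).det) m y * (Lmetric L y)⁻¹ j l
        - ∑ i, (∑ k, ((Lmetric L y).det * (Lmetric L y)⁻¹ j k)
              * pd (fun z => Lmetric L z k i) m y) * (Lmetric L y)⁻¹ i l := by
    intro j l m
    have step1 : pd (fun z => (Lmetric L z).adjugate j l) m y
        = ∑ i, (∑ k, pd (fun z => (Lmetric L z).adjugate j k) m y * Lmetric L y k i)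
            * (Lmetric L y)⁻¹ i l :=
      (contract_right (fun k => pd (fun z => (Lmetric L z).adjugate j k) m y)
        (Lmetric L y) ((Lmetric L y)⁻¹) hone1 l).symm
    rw [step1]
    have step2 : ∀ i, (∑ k, pd (fun z => (Lmetric L z).adjugate j k) m y * Lmetric L y k i)
        = pd (fun z => (Lmetric L z).det) m y * (1 : Matrix (Fin 4) (Fin 4) ℝ) j i
          - ∑ k, ((Lmetric L y).det * (Lmetric L y)⁻¹ j k)
              * pd (fun z => Lmetric L z k i) m y := by
      intro i
      have h := hP1 j i m
      rw [Finset.sum_add_distrib] at h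
      linarith [h]
    simp only [step2]
    exact expand_delta _ _ _ j l
  have hTTT : ∀ j k r, pd (fun z => Lmetric L z k r) j y
      = pd (fun z => Lmetric L z j k) r y := by
    intro j k r
    rw [hTsym2 j k r]
    exact hTsym1 j r k
  have hdiva : ∀ i, ∑ j, pd (fun z => (Lmetric L z).adjugate j i) j y = 0 := by
    intro i
    have hcanon : ∀ r : Fin 4,
        (∑ p, ∑ q, pd (fun z => Lmetric L z q p) r y
          * ((Lmetric L y).det * (Lmetric L y)⁻¹ q p))
        = ∑ a, ∑ b, (Lmetric L y)⁻¹ a b * pd (fun z => Lmetric L z a b) r y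
            * (Lmetric L y).det := by
      intro r
      rw [Finset.sum_comm]
      exact Finset.sum_congr rfl fun a _ => Finset.sum_congr rfl fun b _ => by ring
    calc ∑ j, pd (fun z => (Lmetric L z).adjugate j i) j y
        = ∑ j, (pd (fun z => (Lmetric L z).det) j y * (Lmetric L y)⁻¹ j i
            - ∑ i', (∑ k, ((Lmetric L y).det * (Lmetric L y)⁻¹ j k)
                * pd (fun z => Lmetric L z k i') j y) * (Lmetric L y)⁻¹ i' i) :=
          Finset.sum_congr rfl fun j _ => hP2 j i j
      _ = (∑ j, pd (fun z => (Lmetric L z).det) j y * (Lmetric L y)⁻¹ j i)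
          - ∑ j, ∑ i', (∑ k, ((Lmetric L y).det * (Lmetric L y)⁻¹ j k)
              * pd (fun z => Lmetric L z k i') j y) * (Lmetric L y)⁻¹ i' i :=
          Finset.sum_sub_distrib _ _
      _ = 0 := by
          rw [sub_eq_zero]
          have hl : ∀ j, pd (fun z => (Lmetric L z).det) j y * (Lmetric L y)⁻¹ j i
              = (∑ a, ∑ b, (Lmetric L y)⁻¹ a b * pd (fun z => Lmetric L z a b) j y
                  * (Lmetric L y).det) * (Lmetric L y)⁻¹ j i := by
            intro j; rw [hQ j, hcanon j]
          simp only [hl]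
          conv_rhs => rw [Finset.sum_comm]
          refine Finset.sum_congr rfl fun r _ => ?_
          rw [← Finset.sum_mul]
          congr 1
          refine Finset.sum_congr rfl fun a _ => Finset.sum_congr rfl fun b _ => ?_
          rw [hTTT a b r]
          ring
  have hRHS : ∀ j, fderiv ℝ (fun z => (∑ i, (Lmetric L z)⁻¹ j i * pd f i z)
        * (Lmetric L z).det / L z) y (Pi.single j 1)
      = ((∑ i, (pd (fun z => (Lmetric L z).adjugate j i) j y * pd f i y
            + ((Lmetric L y).det * (Lmetric L y)⁻¹ j i) * pd (pd f i) j y)) * L y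
          - (∑ i, ((Lmetric L y).det * (Lmetric L y)⁻¹ j i) * pd f i y) * pd L j y)
        / (L y) ^ 2 := by
    intro j
    have hGF : (fun z => (∑ i, (Lmetric L z)⁻¹ j i * pd f i z) * (Lmetric L z).det / L z)
        =ᶠ[𝓝 y] fun z => (∑ i, (Lmetric L z).adjugate j i * pd f i z) / L z := by
      filter_upwards [hnhds] with z hz
      have hz' := hinv z hz
      have h1 : (∑ i, (Lmetric L z)⁻¹ j i * pd f i z) * (Lmetric L z).det
          = ∑ i, (Lmetric L z).adjugate j i * pd f i z := by
        rw [Finset.sum_mul]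
        refine Finset.sum_congr rfl fun i _ => ?_
        rw [adj_eq hz' j i]; ring
      rw [h1]
    have e0 : fderiv ℝ (fun z => (∑ i, (Lmetric L z)⁻¹ j i * pd f i z)
          * (Lmetric L z).det / L z) y (Pi.single j 1)
        = pd (fun z => (∑ i, (Lmetric L z).adjugate j i * pd f i z) / L z) j y :=
      pd_congr hGF j
    rw [e0]
    have hnum : DifferentiableAt ℝ (fun z => ∑ i, (Lmetric L z).adjugate j i * pd f i z) y :=
      DifferentiableAt.fun_sum fun i _ => (hdadj j i).mul (hdf1 i)
    rw [pd_div hnum hdL hLy0 j]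
    have h2 : pd (fun z => ∑ i, (Lmetric L z).adjugate j i * pd f i z) j y
        = ∑ i, (pd (fun z => (Lmetric L z).adjugate j i) j y * pd f i y
            + ((Lmetric L y).det * (Lmetric L y)⁻¹ j i) * pd (pd f i) j y) := by
      rw [pd_sum (F := fun i z => (Lmetric L z).adjugate j i * pd f i z)
        (fun i _ => (hdadj j i).mul (hdf1 i)) j]
      refine Finset.sum_congr rfl fun i _ => ?_
      rw [pd_mul (hdadj j i) (hdf1 i) j, adj_eq hdet j i]
    have h3 : (∑ i, (Lmetric L y).adjugate j i * pd f i y)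
        = ∑ i, ((Lmetric L y).det * (Lmetric L y)⁻¹ j i) * pd f i y :=
      Finset.sum_congr rfl fun i _ => by rw [adj_eq hdet j i]
    rw [h2, h3]
  have hWexp : ∀ i j, pd (pd (fun z => L z * f z) j) i y =
      2 * Lmetric L y i j * f y + pd L j y * pd f i y + pd L i y * pd f j y
        + L y * pd (pd f j) i y := by
    intro i j
    have hev : pd (fun z => L z * f z) j =ᶠ[𝓝 y] fun z => pd L j z * f z + L z * pd f j z := by
      filter_upwards [hnhds] with z hz
      exact pd_mul (dAt L hLs z hz) (dAt f hfs z hz) j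
    rw [pd_congr hev i]
    rw [pd_add (a := fun z => pd L j z * f z) (b := fun z => L z * pd f j z) ((hdL1 j).mul hdf) (hdL.mul (hdf1 j)) i]
    rw [pd_mul (hdL1 j) hdf i, pd_mul hdL (hdf1 j) i, hAval i j]
    ring
  have hLHS : (∑ i, ∑ j, (Lmetric L y)⁻¹ i j * pd (pd (fun z => L z * f z) j) i y) - 8 * f y
      = L y * ∑ i, ∑ j, (Lmetric L y)⁻¹ i j * pd (pd f j) i y := by
    have htr : ∑ i, ∑ j, (Lmetric L y)⁻¹ i j * Lmetric L y i j = 4 := by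
      have h1 : ∀ i, ∑ j, (Lmetric L y)⁻¹ i j * Lmetric L y i j
          = (1 : Matrix (Fin 4) (Fin 4) ℝ) i i := by
        intro i
        rw [← hone2 i i]
        exact Finset.sum_congr rfl fun j _ => by rw [hAsym i j]
      simp only [h1]
      simp [Matrix.one_apply]
    have ha1 : ∑ i, ∑ j, (Lmetric L y)⁻¹ i j * (2 * Lmetric L y i j * f y) = 8 * f y := by
      have h1 : ∀ i j, (Lmetric L y)⁻¹ i j * (2 * Lmetric L y i j * f y)
          = (2 * f y) * ((Lmetric L y)⁻¹ i j * Lmetric L y i j) := fun i j => by ring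
      simp only [h1, ← Finset.mul_sum]
      rw [htr]; ring
    have ha2 : ∑ i, ∑ j, (Lmetric L y)⁻¹ i j * (pd L j y * pd f i y) = 0 := by
      have h1 : ∀ i, ∑ j, (Lmetric L y)⁻¹ i j * (pd L j y * pd f i y)
          = pd f i y * (2 * y i) := by
        intro i
        rw [← hLcontr i, Finset.mul_sum]
        exact Finset.sum_congr rfl fun j _ => by ring
      simp only [h1]
      have h2 : ∀ i : Fin 4, pd f i y * (2 * y i) = 2 * (y i * pd f i y) := fun i => by ring
      simp only [h2, ← Finset.mul_sum, hEf, mul_zero]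
    have ha3 : ∑ i, ∑ j, (Lmetric L y)⁻¹ i j * (pd L i y * pd f j y) = 0 := by
      rw [Finset.sum_comm]
      have h1 : ∀ j, ∑ i, (Lmetric L y)⁻¹ i j * (pd L i y * pd f j y)
          = pd f j y * (2 * y j) := by
        intro j
        rw [← hLcontr j, Finset.mul_sum]
        refine Finset.sum_congr rfl fun i _ => ?_
        rw [hgisym i j]; ring
      simp only [h1]
      have h2 : ∀ j : Fin 4, pd f j y * (2 * y j) = 2 * (y j * pd f j y) := fun j => by ring
      simp only [h2, ← Finset.mul_sum, hEf, mul_zero]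
    have ha4 : ∑ i, ∑ j, (Lmetric L y)⁻¹ i j * (L y * pd (pd f j) i y)
        = L y * ∑ i, ∑ j, (Lmetric L y)⁻¹ i j * pd (pd f j) i y := by
      have h1 : ∀ i j, (Lmetric L y)⁻¹ i j * (L y * pd (pd f j) i y)
          = L y * ((Lmetric L y)⁻¹ i j * pd (pd f j) i y) := fun i j => by ring
      simp only [h1, ← Finset.mul_sum]
    have hsplit : (∑ i, ∑ j, (Lmetric L y)⁻¹ i j * pd (pd (fun z => L z * f z) j) i y)
        = (∑ i, ∑ j, (Lmetric L y)⁻¹ i j * (2 * Lmetric L y i j * f y))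
          + (∑ i, ∑ j, (Lmetric L y)⁻¹ i j * (pd L j y * pd f i y))
          + (∑ i, ∑ j, (Lmetric L y)⁻¹ i j * (pd L i y * pd f j y))
          + (∑ i, ∑ j, (Lmetric L y)⁻¹ i j * (L y * pd (pd f j) i y)) := by
      rw [← Finset.sum_add_distrib, ← Finset.sum_add_distrib, ← Finset.sum_add_distrib]
      refine Finset.sum_congr rfl fun i _ => ?_
      rw [← Finset.sum_add_distrib, ← Finset.sum_add_distrib, ← Finset.sum_add_distrib]
      refine Finset.sum_congr rfl fun j _ => ?_
      rw [hWexp i j]; ring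
    rw [hsplit, ha1, ha2, ha3, ha4]
    ring
  have hRHSsum : (∑ j, fderiv ℝ (fun z => (∑ i, (Lmetric L z)⁻¹ j i * pd f i z)
        * (Lmetric L z).det / L z) y (Pi.single j 1))
      = ((Lmetric L y).det * ∑ i, ∑ j, (Lmetric L y)⁻¹ i j * pd (pd f j) i y) * L y
        / (L y) ^ 2 := by
    have step1 : (∑ j, fderiv ℝ (fun z => (∑ i, (Lmetric L z)⁻¹ j i * pd f i z)
          * (Lmetric L z).det / L z) y (Pi.single j 1))
        = (∑ j, ((∑ i, (pd (fun z => (Lmetric L z).adjugate j i) j y * pd f i y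
              + ((Lmetric L y).det * (Lmetric L y)⁻¹ j i) * pd (pd f i) j y)) * L y
            - (∑ i, ((Lmetric L y).det * (Lmetric L y)⁻¹ j i) * pd f i y) * pd L j y))
          / (L y) ^ 2 := by
      rw [Finset.sum_div]
      exact Finset.sum_congr rfl fun j _ => hRHS j
    rw [step1]
    congr 1
    -- numerator computation
    have hz1 : ∑ j, ∑ i, pd (fun z => (Lmetric L z).adjugate j i) j y * pd f i y = 0 := by
      rw [Finset.sum_comm]
      have h1 : ∀ i, ∑ j, pd (fun z => (Lmetric L z).adjugate j i) j y * pd f i y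
          = (∑ j, pd (fun z => (Lmetric L z).adjugate j i) j y) * pd f i y := by
        intro i; rw [Finset.sum_mul]
      simp only [h1, hdiva, zero_mul, Finset.sum_const_zero]
    have hz2 : ∑ j, ∑ i, ((Lmetric L y).det * (Lmetric L y)⁻¹ j i) * pd (pd f i) j y
        = (Lmetric L y).det * ∑ i, ∑ j, (Lmetric L y)⁻¹ i j * pd (pd f j) i y := by
      have h1 : ∀ (j i : Fin 4), ((Lmetric L y).det * (Lmetric L y)⁻¹ j i) * pd (pd f i) j y
          = (Lmetric L y).det * ((Lmetric L y)⁻¹ j i * pd (pd f i) j y) := fun j i => by ring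
      simp only [h1, ← Finset.mul_sum]
    have hz3 : ∑ j, (∑ i, ((Lmetric L y).det * (Lmetric L y)⁻¹ j i) * pd f i y) * pd L j y
        = 0 := by
      have h1 : ∀ j, (∑ i, ((Lmetric L y).det * (Lmetric L y)⁻¹ j i) * pd f i y) * pd L j y
          = (Lmetric L y).det * ∑ i, pd f i y * ((Lmetric L y)⁻¹ j i * pd L j y) := by
        intro j
        rw [Finset.sum_mul, Finset.mul_sum]
        exact Finset.sum_congr rfl fun i _ => by ring
      simp only [h1, ← Finset.mul_sum]
      rw [Finset.sum_comm]
      have h2 : ∀ i, ∑ j, pd f i y * ((Lmetric L y)⁻¹ j i * pd L j y)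
          = pd f i y * (2 * y i) := by
        intro i
        rw [← Finset.mul_sum]
        congr 1
        rw [← hLcontr i]
        exact Finset.sum_congr rfl fun j _ => by rw [hgisym j i]
      simp only [h2]
      have h3 : ∀ i : Fin 4, pd f i y * (2 * y i) = 2 * (y i * pd f i y) := fun i => by ring
      simp only [h3, ← Finset.mul_sum, hEf, mul_zero]
    rw [Finset.sum_sub_distrib, hz3, sub_zero, ← Finset.sum_mul]
    congr 1
    simp only [Finset.sum_add_distrib]
    rw [hz1, hz2, zero_add]
  rw [hLHS, hRHSsum]
  ring
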